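/- arXiv:2311.10017 — 14 statements merged into one kernel-verified Lean document; each statement's English description precedes it below -/
import Mathlib

section
/- Let A be a bounded distributive lattice and let □ : A → A satisfy □(a ⊓ b) = □a ⊓ □b for all a, b and □⊤ = ⊤. Order the prime filters of A by inclusion and define a relation R on them by U R V iff for all a, □a ∈ U implies a ∈ V. Then the map η sending a ∈ A to the set η(a) = {U : U is a prime filter of A and a ∈ U} is an injective map into the upsets of the inclusion-ordered poset of prime filters satisfying η(a ⊓ b) = η(a) ∩ η(b), η(a ⊔ b) = η(a) ∪ η(b), η(⊤) = the set of all prime filters, η(⊥) = ∅, and moreover η(□a) = {U : for every prime filter V, U R V implies a ∈ V} for all a ∈ A. -/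
/-- A prime filter of a bounded distributive lattice: upward closed, closed under
binary meets, contains `⊤`, omits `⊥`, and joins in it have a member in it. -/
def IsPrimeFilter {A : Type*} [DistribLattice A] [BoundedOrder A] (F : Set A) : Prop :=
  (∀ a b : A, a ∈ F → a ≤ b → b ∈ F) ∧
  (∀ a b : A, a ∈ F → b ∈ F → a ⊓ b ∈ F) ∧
  (⊤ : A) ∈ F ∧ (⊥ : A) ∉ F ∧
  (∀ a b : A, a ⊔ b ∈ F → a ∈ F ∨ b ∈ F)

/-!
Everything rests on the prime filter theorem: a filter of a distributive lattice omitting `a`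
extends to a prime filter omitting `a`. Applied to principal filters it separates `a ≰ b`, which
gives injectivity. For the box clause, if `□a ∉ U` then `a` lies outside the filter
`{b | □b ∈ U}` (a filter because `□` preserves finite meets), and a prime filter `V` extending it
and omitting `a` satisfies `U R V`.
-/

open Order

section

variable {A : Type*} [DistribLattice A] [BoundedOrder A]

namespace IsPrimeFilter

variable {F : Set A}

theorem mem_of_le (hF : IsPrimeFilter F) {a b : A} (ha : a ∈ F) (hab : a ≤ b) : b ∈ F :=
  hF.1 a b ha hab

theorem top_mem (hF : IsPrimeFilter F) : (⊤ : A) ∈ F := hF.2.2.1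

theorem bot_notMem (hF : IsPrimeFilter F) : (⊥ : A) ∉ F := hF.2.2.2.1

theorem inf_mem_iff (hF : IsPrimeFilter F) {a b : A} : a ⊓ b ∈ F ↔ a ∈ F ∧ b ∈ F :=
  ⟨fun h => ⟨hF.mem_of_le h inf_le_left, hF.mem_of_le h inf_le_right⟩,
    fun h => hF.2.1 a b h.1 h.2⟩

theorem sup_mem_iff (hF : IsPrimeFilter F) {a b : A} : a ⊔ b ∈ F ↔ a ∈ F ∨ b ∈ F :=
  ⟨hF.2.2.2.2 a b, fun h => h.elim (hF.mem_of_le · le_sup_left) (hF.mem_of_le · le_sup_right)⟩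

theorem isPFilter (hF : IsPrimeFilter F) : IsPFilter F :=
  IsPFilter.of_def ⟨⊤, hF.top_mem⟩
    (fun x hx y hy => ⟨x ⊓ y, hF.inf_mem_iff.2 ⟨hx, hy⟩, inf_le_left, inf_le_right⟩)
    (fun hxy hx => hF.mem_of_le hx hxy)

end IsPrimeFilter

theorem isPrimeFilter_compl_of_isPrime {J : Ideal A} (hJ : J.IsPrime) :
    IsPrimeFilter (J : Set A)ᶜ :=
  ⟨fun _ _ ha hab hb => ha (J.lower hab hb),
    fun _ _ ha hb hab => (hJ.mem_or_mem hab).elim ha hb,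
    hJ.top_notMem, not_not.2 J.bot_mem,
    fun _ _ hab => not_and_or.1 fun h => hab (J.sup_mem h.1 h.2)⟩

theorem exists_isPrimeFilter_of_notMem {F : Set A} (hF : IsPFilter F) {a : A} (ha : a ∉ F) :
    ∃ P, IsPrimeFilter P ∧ F ⊆ P ∧ a ∉ P := by
  have hdisj : Disjoint (hF.toPFilter : Set A) (Ideal.principal a) :=
    Set.disjoint_left.2 fun x hx hxa => ha (hF.toPFilter.mem_of_le hxa hx)
  obtain ⟨J, hJ, haJ, hFJ⟩ := DistribLattice.prime_ideal_of_disjoint_filter_ideal hdisj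
  exact ⟨_, isPrimeFilter_compl_of_isPrime hJ, fun x hx => Set.disjoint_left.1 hFJ hx,
    not_not.2 (haJ le_rfl)⟩

theorem le_of_forall_isPrimeFilter {a b : A} (h : ∀ P, IsPrimeFilter P → a ∈ P → b ∈ P) :
    a ≤ b := by
  by_contra hab
  obtain ⟨P, hP, haP, hbP⟩ :=
    exists_isPrimeFilter_of_notMem (PFilter.principal a).isPFilter (a := b) hab
  exact hbP (h P hP (haP le_rfl))

end

theorem Order.IsPFilter.preimage {α β : Type*} [SemilatticeInf α] [OrderTop α]
    [SemilatticeInf β] [OrderTop β] (f : InfTopHom α β) {F : Set β} (hF : IsPFilter F) :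
    IsPFilter (f ⁻¹' F) :=
  IsPFilter.of_def ⟨⊤, by
      rw [Set.mem_preimage, map_top]; exact hF.toPFilter.top_mem⟩
    (fun x hx y hy => ⟨x ⊓ y, by
      rw [Set.mem_preimage, map_inf]; exact hF.toPFilter.inf_mem hx hy,
      inf_le_left, inf_le_right⟩)
    (fun hxy hx => hF.toPFilter.mem_of_le (OrderHomClass.mono f hxy) hx)

theorem map_mem_iff_forall_isPrimeFilter {A B : Type*} [DistribLattice A] [BoundedOrder A]
    [SemilatticeInf B] [OrderTop B] (f : InfTopHom A B) {U : Set B} (hU : IsPFilter U) (a : A) :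
    f a ∈ U ↔ ∀ V, IsPrimeFilter V → f ⁻¹' U ⊆ V → a ∈ V := by
  refine ⟨fun ha V _ hUV => hUV ha, fun h => ?_⟩
  by_contra ha
  obtain ⟨V, hV, hUV, haV⟩ := exists_isPrimeFilter_of_notMem (hU.preimage f) (a := a) ha
  exact haV (h V hV hUV)

theorem stmt0 {A : Type*} [DistribLattice A] [BoundedOrder A]
    (box : A → A)
    (hmeet : ∀ a b : A, box (a ⊓ b) = box a ⊓ box b) (htop : box ⊤ = ⊤)
    (R : {F : Set A // IsPrimeFilter F} → {F : Set A // IsPrimeFilter F} → Prop)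
    (hR : ∀ U V, R U V ↔ ∀ a : A, box a ∈ U.val → a ∈ V.val)
    (η : A → Set {F : Set A // IsPrimeFilter F})
    (hη : ∀ a : A, η a = {U | a ∈ U.val}) :
    Function.Injective η ∧
    (∀ a : A, ∀ U V : {F : Set A // IsPrimeFilter F}, U ∈ η a → U.val ⊆ V.val → V ∈ η a) ∧
    (∀ a b : A, η (a ⊓ b) = η a ∩ η b) ∧
    (∀ a b : A, η (a ⊔ b) = η a ∪ η b) ∧
    η ⊤ = Set.univ ∧ η ⊥ = ∅ ∧
    (∀ a : A, η (box a) = {U | ∀ V, R U V → a ∈ V.val}) := by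
  obtain rfl : η = fun a => {U | a ∈ U.val} := funext hη
  let f : InfTopHom A A := ⟨⟨box, hmeet⟩, htop⟩
  have hle (a b : A) (h : {U : {F : Set A // IsPrimeFilter F} | a ∈ U.val} ⊆ {U | b ∈ U.val}) :
      a ≤ b :=
    le_of_forall_isPrimeFilter fun P hP ha => h (a := ⟨P, hP⟩) ha
  refine ⟨fun a b hab => le_antisymm (hle a b hab.subset) (hle b a hab.symm.subset),
    fun a U V hU hUV => hUV hU, fun a b => ?_, fun a b => ?_, ?_, ?_, fun a => ?_⟩
  · ext U; exact U.2.inf_mem_iff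
  · ext U; exact U.2.sup_mem_iff
  · ext U; simpa using U.2.top_mem
  · ext U; simpa using U.2.bot_notMem
  · ext U
    simp only [Set.mem_ofPred_eq, hR]
    exact (map_mem_iff_forall_isPrimeFilter f U.2.isPFilter a).trans
      ⟨fun h V hUV => h V.1 V.2 hUV, fun h V hV hUV => h ⟨V, hV⟩ hUV⟩
end

section
/- Let (W,≤) be a poset, let R₁ be a □₊-relation on W and R₂ a □₋-relation on W. Then the following are equivalent: (i) for all upsets a, b of W, □₋a ∩ □₊(a ∪ b) ⊆ □₊b, where □₊x := {u : ∀v, u R₁ v → v ∈ x} and □₋x := {u : ∀v, u R₂ v → v ∉ x}; (ii) for all u, v with u R₁ v there exists v' with v' ≤ v, u R₁ v' and u R₂ v'. -/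
/-!
If every `R₁`-successor `v` of `u` lies above some `v'` with `u R₁ v'` and `u R₂ v'`, then for
`u ∈ □₋a ∩ □₊(a ∪ b)` the point `v'` avoids `a`, so it lies in `b`, and so does `v` because `b`
is an upset. Conversely, if this fails for `u R₁ v`, the upsets `a = {w | ¬ u R₂ w}` and
`b = W \ ↓v` refute the inclusion at `u`.
-/

namespace Box

variable {W : Type*}

def pos (R : W → W → Prop) (x : Set W) : Set W := {u | ∀ v, R u v → v ∈ x}

def neg (R : W → W → Prop) (x : Set W) : Set W := {u | ∀ v, R u v → v ∉ x}

theorem neg_inter_pos_union_subset [LE W] {R₁ R₂ : W → W → Prop}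
    (h : ∀ u v, R₁ u v → ∃ v', v' ≤ v ∧ R₁ u v' ∧ R₂ u v') (a : Set W) {b : Set W}
    (hb : IsUpperSet b) : neg R₂ a ∩ pos R₁ (a ∪ b) ⊆ pos R₁ b := by
  rintro u ⟨hua, huab⟩ v huv
  obtain ⟨v', hv'v, huv'₁, huv'₂⟩ := h u v huv
  have hv'b : v' ∈ b := (huab v' huv'₁).resolve_left (hua v' huv'₂)
  exact hb hv'v hv'b

theorem exists_le_of_neg_inter_pos_union_subset [Preorder W] {R₁ R₂ : W → W → Prop}
    (h₂ : ∀ u v v', R₂ u v → v' ≤ v → R₂ u v')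
    (h : ∀ a b : Set W, IsUpperSet a → IsUpperSet b → neg R₂ a ∩ pos R₁ (a ∪ b) ⊆ pos R₁ b)
    (u v : W) (huv : R₁ u v) : ∃ v', v' ≤ v ∧ R₁ u v' ∧ R₂ u v' := by
  by_contra! hne
  have ha : IsUpperSet {w | ¬ R₂ u w} := fun x y hxy hx hy => hx (h₂ u y x hy hxy)
  have hu : u ∈ neg R₂ {w | ¬ R₂ u w} ∩ pos R₁ ({w | ¬ R₂ u w} ∪ (Set.Iic v)ᶜ) :=
    ⟨fun w hw hnw => hnw hw, fun w huw => by
      by_cases hwv : w ≤ v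
      · exact Or.inl (hne w hwv huw)
      · exact Or.inr hwv⟩
  exact h _ _ ha (isLowerSet_Iic v).compl hu v huv le_rfl

end Box

theorem stmt3_general {W : Type*} [PartialOrder W] (R₁ R₂ : W → W → Prop)
    (h₂ : ∀ u v u' v' : W, R₂ u v → u' ≤ u → v' ≤ v → R₂ u' v') :
    (∀ a b : Set W, (∀ u v : W, u ∈ a → u ≤ v → v ∈ a) → (∀ u v : W, u ∈ b → u ≤ v → v ∈ b) →
      {u : W | ∀ v, R₂ u v → v ∉ a} ∩ {u : W | ∀ v, R₁ u v → v ∈ a ∪ b} ⊆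
        {u : W | ∀ v, R₁ u v → v ∈ b}) ↔
    (∀ u v : W, R₁ u v → ∃ v', v' ≤ v ∧ R₁ u v' ∧ R₂ u v') := by
  constructor
  · intro h
    exact Box.exists_le_of_neg_inter_pos_union_subset
      (fun u v v' huv hv' => h₂ u v u v' huv le_rfl hv')
      fun a b ha hb => h a b (fun _ _ hu huv => ha huv hu) (fun _ _ hu huv => hb huv hu)
  · intro h a b _ hb
    exact Box.neg_inter_pos_union_subset h a fun _ _ huv hu => hb _ _ hu huv

theorem stmt3 {W : Type*} [PartialOrder W] (R₁ R₂ : W → W → Prop)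
    (h₁ : ∀ u v u' v' : W, R₁ u v → u' ≤ u → v ≤ v' → R₁ u' v')
    (h₂ : ∀ u v u' v' : W, R₂ u v → u' ≤ u → v' ≤ v → R₂ u' v') :
    (∀ a b : Set W, (∀ u v : W, u ∈ a → u ≤ v → v ∈ a) → (∀ u v : W, u ∈ b → u ≤ v → v ∈ b) →
      {u : W | ∀ v, R₂ u v → v ∉ a} ∩ {u : W | ∀ v, R₁ u v → v ∈ a ∪ b} ⊆
        {u : W | ∀ v, R₁ u v → v ∈ b}) ↔
    (∀ u v : W, R₁ u v → ∃ v', v' ≤ v ∧ R₁ u v' ∧ R₂ u v') :=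
  stmt3_general R₁ R₂ h₂
end

section
/- Let (W,≤) be a poset, let R₁ be a ♦₊-relation on W and R₂ a □₋-relation on W. Then the following are equivalent: (i) for all upsets a, c of W, if ♦₊a ⊆ □₋a ∪ c then ♦₊a ⊆ c, where ♦₊x := {u : ∃v, u R₁ v ∧ v ∈ x} and □₋x := {u : ∀v, u R₂ v → v ∉ x}; (ii) for all u, v with u R₁ v there exists u' with u' ≤ u, u' R₁ v and u' R₂ v. -/
/-!
For (ii) ⇒ (i): a point of `♦₊a` has, below it, a point of `♦₊a` that is not in `□₋a`, hence
lies in `c`, and so does the original point because `c` is an upset. For (i) ⇒ (ii): take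
`a = Ici v` and `c` the upward closure of the points `u'` with `u' R₁ v` and `u' R₂ v`; downward
closure of both relations in their second argument gives `♦₊a ⊆ □₋a ∪ c`, and `u ∈ ♦₊a` then
yields the required `u' ≤ u`.
-/

open Set

section

variable {W : Type*}

def diamondPlus (R : W → W → Prop) (a : Set W) : Set W := {u | ∃ v, R u v ∧ v ∈ a}

def boxMinus (R : W → W → Prop) (a : Set W) : Set W := {u | ∀ v, R u v → v ∉ a}

theorem diamondPlus_subset_of_subset_boxMinus_union [Preorder W] {R₁ R₂ : W → W → Prop}
    (H : ∀ u v, R₁ u v → ∃ u' ≤ u, R₁ u' v ∧ R₂ u' v) {a c : Set W} (hc : IsUpperSet c)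
    (hsub : diamondPlus R₁ a ⊆ boxMinus R₂ a ∪ c) : diamondPlus R₁ a ⊆ c := by
  rintro u ⟨v, huv, hva⟩
  obtain ⟨u', hu'u, h₁, h₂⟩ := H u v huv
  rcases hsub ⟨v, h₁, hva⟩ with hbox | hu'c
  · exact absurd hva (hbox v h₂)
  · exact hc hu'u hu'c

theorem diamondPlus_Ici_subset_boxMinus_Ici_union [Preorder W] {R₁ R₂ : W → W → Prop}
    (h₁ : ∀ u v v', R₁ u v → v' ≤ v → R₁ u v') (h₂ : ∀ u v v', R₂ u v → v' ≤ v → R₂ u v')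
    (v : W) : diamondPlus R₁ (Ici v) ⊆ boxMinus R₂ (Ici v) ∪ {u | R₁ u v ∧ R₂ u v} := by
  rintro u ⟨w, huw, hvw⟩
  by_cases hbox : u ∈ boxMinus R₂ (Ici v)
  · exact Or.inl hbox
  · obtain ⟨w', huw', hvw'⟩ : ∃ w', R₂ u w' ∧ v ≤ w' := by
      simpa [boxMinus] using hbox
    exact Or.inr ⟨h₁ u w v huw hvw, h₂ u w' v huw' hvw'⟩

end

theorem stmt4 {W : Type*} [PartialOrder W] (R₁ R₂ : W → W → Prop)
    (h₁ : ∀ u v u' v' : W, R₁ u v → u ≤ u' → v' ≤ v → R₁ u' v')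
    (h₂ : ∀ u v u' v' : W, R₂ u v → u' ≤ u → v' ≤ v → R₂ u' v') :
    (∀ a c : Set W, (∀ u v : W, u ∈ a → u ≤ v → v ∈ a) → (∀ u v : W, u ∈ c → u ≤ v → v ∈ c) →
      ({u : W | ∃ v, R₁ u v ∧ v ∈ a} ⊆ {u : W | ∀ v, R₂ u v → v ∉ a} ∪ c →
        {u : W | ∃ v, R₁ u v ∧ v ∈ a} ⊆ c)) ↔
    (∀ u v : W, R₁ u v → ∃ u', u' ≤ u ∧ R₁ u' v ∧ R₂ u' v) := by
  constructor
  · intro H u v huv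
    let c : Set W := upperClosure {u' | R₁ u' v ∧ R₂ u' v}
    have hsub : diamondPlus R₁ (Ici v) ⊆ boxMinus R₂ (Ici v) ∪ c :=
      (diamondPlus_Ici_subset_boxMinus_Ici_union (fun u w v' h hv => h₁ u w u v' h le_rfl hv)
        (fun u w v' h hv => h₂ u w u v' h le_rfl hv) v).trans
        (union_subset_union_right _ subset_upperClosure)
    have huc : u ∈ c :=
      H (Ici v) c (fun _ _ hx hxy => hx.trans hxy)
        (fun _ _ hx hxy => (upperClosure _).upper hxy hx) hsub ⟨v, huv, le_rfl⟩
    obtain ⟨u', hu', hu'u⟩ := mem_upperClosure.1 huc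
    exact ⟨u', hu'u, hu'⟩
  · intro H a c _ hc
    exact diamondPlus_subset_of_subset_boxMinus_union H fun _ _ hxy hx => hc _ _ hx hxy
end

section
/- Let (W,≤) be a poset, let R₁ be a ♦₊-relation on W and R₂ a □₊-relation on W. Then the following are equivalent: (i) for all upsets a, b, c of W, if ♦₊a ⊆ □₊b ∪ c then ♦₊a ⊆ ♦₊(a ∩ b) ∪ c, where ♦₊x := {u : ∃v, u R₁ v ∧ v ∈ x} and □₊x := {u : ∀v, u R₂ v → v ∈ x}; (ii) for all u, v with u R₁ v there exist u' ≤ u and v' ≥ v such that u' R₁ v, u R₁ v' and u' R₂ v'. -/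
/-!
Direction (ii) ⇒ (i) is a direct chase: for `u R₁ v` with `v ∈ a`, the point `u' ≤ u` of (ii) lies
in `♦₊a`, hence in `□₊b` (and then `v' ∈ a ∩ b` witnesses `u ∈ ♦₊(a ∩ b)`) or in the upset `c`.

Direction (i) ⇒ (ii) instantiates (i), for given `u R₁ v`, with the upsets `a = ↑v`, `c = W ∖ ↓u`
and `b` the set of `R₂`-successors of points `u' ≤ u` with `u' R₁ v`. The hypothesis of (i) holds
since every `x ≤ u` in `♦₊a` satisfies `x R₁ v`, and `u ∈ ♦₊a ∖ c`, so `u ∈ ♦₊(a ∩ b)`, which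
unpacks to (ii).
-/

namespace PosetModal

variable {W : Type*}

def diamondPlus (R : W → W → Prop) (a : Set W) : Set W := {u | ∃ v, R u v ∧ v ∈ a}

def boxPlus (R : W → W → Prop) (a : Set W) : Set W := {u | ∀ v, R u v → v ∈ a}

variable [Preorder W] {R₁ R₂ : W → W → Prop}

theorem diamondPlus_subset_diamondPlus_inter_union
    (H : ∀ u v, R₁ u v → ∃ u' v', u' ≤ u ∧ v ≤ v' ∧ R₁ u' v ∧ R₁ u v' ∧ R₂ u' v')
    {a b c : Set W} (ha : IsUpperSet a) (hc : IsUpperSet c)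
    (hsub : diamondPlus R₁ a ⊆ boxPlus R₂ b ∪ c) :
    diamondPlus R₁ a ⊆ diamondPlus R₁ (a ∩ b) ∪ c := by
  rintro u ⟨v, huv, hva⟩
  obtain ⟨u', v', hu'u, hvv', hu'v, huv', hu'v'⟩ := H u v huv
  rcases hsub ⟨v, hu'v, hva⟩ with hbox | hu'c
  · exact Or.inl ⟨v', huv', ha hvv' hva, hbox v' hu'v'⟩
  · exact Or.inr (hc hu'u hu'c)

theorem exists_frame_witness_of_diamondPlus_subset
    (h₁ : ∀ u v v', R₁ u v → v' ≤ v → R₁ u v')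
    (h₂ : ∀ u v v', R₂ u v → v ≤ v' → R₂ u v')
    (H : ∀ a b c : Set W, IsUpperSet a → IsUpperSet b → IsUpperSet c →
      diamondPlus R₁ a ⊆ boxPlus R₂ b ∪ c → diamondPlus R₁ a ⊆ diamondPlus R₁ (a ∩ b) ∪ c)
    {u v : W} (huv : R₁ u v) :
    ∃ u' v', u' ≤ u ∧ v ≤ v' ∧ R₁ u' v ∧ R₁ u v' ∧ R₂ u' v' := by
  set b : Set W := {w | ∃ u', u' ≤ u ∧ R₁ u' v ∧ R₂ u' w}
  have hb : IsUpperSet b := by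
    rintro w w' hww' ⟨u', hu'u, hu'v, hu'w⟩
    exact ⟨u', hu'u, hu'v, h₂ u' w w' hu'w hww'⟩
  have hcover : diamondPlus R₁ (Set.Ici v) ⊆ boxPlus R₂ b ∪ (Set.Iic u)ᶜ := by
    rintro x ⟨w, hxw, hvw⟩
    by_cases hxu : x ≤ u
    · exact Or.inl fun y hxy => ⟨x, hxu, h₁ x w v hxw hvw, hxy⟩
    · exact Or.inr hxu
  rcases H _ b _ (isUpperSet_Ici v) hb (isLowerSet_Iic u).compl hcover ⟨v, huv, le_rfl⟩ with
    ⟨v', huv', hvv', u', hu'u, hu'v, hu'v'⟩ | huc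
  · exact ⟨u', v', hu'u, hvv', hu'v, huv', hu'v'⟩
  · exact absurd le_rfl huc

end PosetModal

open PosetModal in
theorem stmt5 {W : Type*} [PartialOrder W] (R₁ R₂ : W → W → Prop)
    (h₁ : ∀ u v u' v' : W, R₁ u v → u ≤ u' → v' ≤ v → R₁ u' v')
    (h₂ : ∀ u v u' v' : W, R₂ u v → u' ≤ u → v ≤ v' → R₂ u' v') :
    (∀ a b c : Set W, (∀ u v : W, u ∈ a → u ≤ v → v ∈ a) →
      (∀ u v : W, u ∈ b → u ≤ v → v ∈ b) → (∀ u v : W, u ∈ c → u ≤ v → v ∈ c) →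
      ({u : W | ∃ v, R₁ u v ∧ v ∈ a} ⊆ {u : W | ∀ v, R₂ u v → v ∈ b} ∪ c →
        {u : W | ∃ v, R₁ u v ∧ v ∈ a} ⊆ {u : W | ∃ v, R₁ u v ∧ v ∈ a ∩ b} ∪ c)) ↔
    (∀ u v : W, R₁ u v →
      ∃ u' v', u' ≤ u ∧ v ≤ v' ∧ R₁ u' v ∧ R₁ u v' ∧ R₂ u' v') := by
  have isUpperSet_iff (s : Set W) : (∀ u v, u ∈ s → u ≤ v → v ∈ s) ↔ IsUpperSet s :=
    ⟨fun h _ _ huv hu => h _ _ hu huv, fun h _ _ hu huv => h huv hu⟩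
  constructor
  · intro H u v huv
    refine exists_frame_witness_of_diamondPlus_subset
      (fun u v v' h hv => h₁ u v u v' h le_rfl hv) (fun u v v' h hv => h₂ u v u v' h le_rfl hv)
      (fun a b c ha hb hc => ?_) huv
    exact H a b c ((isUpperSet_iff a).2 ha) ((isUpperSet_iff b).2 hb) ((isUpperSet_iff c).2 hc)
  · intro H a b c ha _ hc
    exact diamondPlus_subset_diamondPlus_inter_union H ((isUpperSet_iff a).1 ha)
      ((isUpperSet_iff c).1 hc)
end

section
/- Let W be the set of pairs (q, i) with q a real number satisfying 0 ≤ q ≤ 1 and i a Boolean, partially ordered by (q,i) ≤ (r,j) iff q ≤ r and i = j. Define (q,i) R^□ (r,j) iff i = false, j = true and q ≤ r, and (q,i) R^♦ (r,j) iff i = false, j = true and r < q. Then: R^□ is a □₊-relation on W; R^♦ is a ♦₊-relation on W; for all u, v with u R^♦ v there exist u' ≤ u and v' ≥ v such that u' R^♦ v, u R^♦ v' and u' R^□ v'; yet R^□ ∩ R^♦ = ∅ while R^♦ ≠ ∅ (so R^♦ and R^□ are not generated by any single relation contained in both). -/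
/-- The carrier: pairs of a real number in `[0,1]` and a Boolean. -/
def W6 : Type := {q : ℝ // 0 ≤ q ∧ q ≤ 1} × Bool

/-- The partial order: `(q,i) ≤ (r,j)` iff `q ≤ r` and `i = j`. -/
def le6 (p q : W6) : Prop := p.1.1 ≤ q.1.1 ∧ p.2 = q.2

/-- The box relation: `(q,i) R□ (r,j)` iff `i = false`, `j = true` and `q ≤ r`. -/
def Rbox6 (p q : W6) : Prop := p.2 = false ∧ q.2 = true ∧ p.1.1 ≤ q.1.1

/-- The diamond relation: `(q,i) R♦ (r,j)` iff `i = false`, `j = true` and `r < q`. -/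
def Rdia6 (p q : W6) : Prop := p.2 = false ∧ q.2 = true ∧ q.1.1 < p.1.1

theorem Rbox6.of_le_of_le {u v u' v' : W6} (h : Rbox6 u v) (hu : le6 u' u) (hv : le6 v v') :
    Rbox6 u' v' :=
  ⟨hu.2.trans h.1, hv.2 ▸ h.2.1, hu.1.trans (h.2.2.trans hv.1)⟩

theorem Rdia6.of_le_of_le {u v u' v' : W6} (h : Rdia6 u v) (hu : le6 u u') (hv : le6 v' v) :
    Rdia6 u' v' :=
  ⟨hu.2 ▸ h.1, hv.2.trans h.2.1, hv.1.trans_lt (h.2.2.trans_le hu.1)⟩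

theorem Rbox6.not_Rdia6 {u v : W6} (h : Rbox6 u v) : ¬ Rdia6 u v :=
  fun h' => h.2.2.not_gt h'.2.2

/-- Any `m` strictly between the coordinates of `v` and `u` yields the two copies
`(m, false) ≤ u` and `v ≤ (m, true)` of the interpolating point. -/
theorem Rdia6.exists_interpolant {u v : W6} (h : Rdia6 u v) :
    ∃ u' v' : W6, le6 u' u ∧ le6 v v' ∧ Rdia6 u' v ∧ Rdia6 u v' ∧ Rbox6 u' v' := by
  obtain ⟨hu, hv, hvu⟩ := h
  obtain ⟨m, hvm, hmu⟩ := exists_between hvu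
  have hm : 0 ≤ m ∧ m ≤ 1 := ⟨v.1.2.1.trans hvm.le, hmu.le.trans u.1.2.2⟩
  exact ⟨(⟨m, hm⟩, false), (⟨m, hm⟩, true), ⟨hmu.le, hu.symm⟩, ⟨hvm.le, hv⟩,
    ⟨rfl, hv, hvm⟩, ⟨hu, rfl, hmu⟩, ⟨rfl, rfl, le_rfl⟩⟩

theorem Rdia6_one_zero :
    Rdia6 (⟨1, zero_le_one, le_rfl⟩, false) (⟨0, le_rfl, zero_le_one⟩, true) :=
  ⟨rfl, rfl, zero_lt_one⟩

theorem stmt6 :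
    -- `R□` is a `□₊`-relation
    (∀ u v u' v' : W6, Rbox6 u v → le6 u' u → le6 v v' → Rbox6 u' v') ∧
    -- `R♦` is a `♦₊`-relation
    (∀ u v u' v' : W6, Rdia6 u v → le6 u u' → le6 v' v → Rdia6 u' v') ∧
    -- the frame condition `(♦₊, □₊)` holds
    (∀ u v : W6, Rdia6 u v →
      ∃ u' v' : W6, le6 u' u ∧ le6 v v' ∧ Rdia6 u' v ∧ Rdia6 u v' ∧ Rbox6 u' v') ∧
    -- yet the intersection of the two relations is empty
    (∀ u v : W6, ¬ (Rbox6 u v ∧ Rdia6 u v)) ∧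
    -- while `R♦` is nonempty
    (∃ u v : W6, Rdia6 u v) :=
  ⟨fun _ _ _ _ => Rbox6.of_le_of_le, fun _ _ _ _ => Rdia6.of_le_of_le,
    fun _ _ => Rdia6.exists_interpolant, fun _ _ h => h.1.not_Rdia6 h.2, ⟨_, _, Rdia6_one_zero⟩⟩
end

section
/- Let A be a bounded distributive lattice and let ♦ : A → A satisfy ♦(a ⊔ b) = ♦a ⊔ ♦b for all a, b and ♦⊥ = ⊥. Let U and V be prime filters of A such that ♦a ∈ U for all a ∈ V. Then there exists a prime filter V' of A with V ⊆ V', with ♦a ∈ U for all a ∈ V', and which is maximal with this property: every prime filter W with V' ⊆ W such that ♦a ∈ U for all a ∈ W equals V'. -/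
section

variable {A : Type*} [DistribLattice A] [BoundedOrder A]

theorem IsPrimeFilter.sUnion_of_isChain {c : Set (Set A)} (hc : ∀ F ∈ c, IsPrimeFilter F)
    (hchain : IsChain (· ⊆ ·) c) (hne : c.Nonempty) : IsPrimeFilter (⋃₀ c) := by
  obtain ⟨F₀, hF₀⟩ := hne
  refine ⟨?upward, ?inf, ⟨F₀, hF₀, (hc F₀ hF₀).2.2.1⟩, ?bot, ?prime⟩
  case upward =>
    rintro a b ⟨F, hF, ha⟩ hab
    exact ⟨F, hF, (hc F hF).1 a b ha hab⟩
  case inf =>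
    rintro a b ⟨F, hF, ha⟩ ⟨G, hG, hb⟩
    rcases hchain.total hF hG with hFG | hGF
    · exact ⟨G, hG, (hc G hG).2.1 a b (hFG ha) hb⟩
    · exact ⟨F, hF, (hc F hF).2.1 a b ha (hGF hb)⟩
  case bot =>
    rintro ⟨F, hF, hbot⟩
    exact (hc F hF).2.2.2.1 hbot
  case prime =>
    rintro a b ⟨F, hF, hab⟩
    exact ((hc F hF).2.2.2.2 a b hab).imp (⟨F, hF, ·⟩) (⟨F, hF, ·⟩)

theorem IsPrimeFilter.exists_maximal_subset {V T : Set A} (hV : IsPrimeFilter V) (hVT : V ⊆ T) :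
    ∃ V', V ⊆ V' ∧ Maximal (fun F => IsPrimeFilter F ∧ F ⊆ T) V' := by
  refine zorn_subset_nonempty {F | IsPrimeFilter F ∧ F ⊆ T} ?_ V ⟨hV, hVT⟩
  intro c hcS hchain hne
  refine ⟨⋃₀ c, ⟨?_, Set.sUnion_subset fun F hF => (hcS hF).2⟩,
    fun _ => Set.subset_sUnion_of_mem⟩
  exact .sUnion_of_isChain (fun F hF => (hcS hF).1) hchain hne

end

theorem stmt7_general {A : Type*} [DistribLattice A] [BoundedOrder A]
    (dia : A → A)
    (U V : Set A) (hV : IsPrimeFilter V)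
    (hUV : ∀ a : A, a ∈ V → dia a ∈ U) :
    ∃ V' : Set A, IsPrimeFilter V' ∧ V ⊆ V' ∧ (∀ a : A, a ∈ V' → dia a ∈ U) ∧
      (∀ W : Set A, IsPrimeFilter W → V' ⊆ W → (∀ a : A, a ∈ W → dia a ∈ U) → W = V') := by
  obtain ⟨V', hVV', hmax⟩ := hV.exists_maximal_subset (T := dia ⁻¹' U) hUV
  exact ⟨V', hmax.prop.1, hVV', hmax.prop.2,
    fun W hW hV'W hWU => (hmax.eq_of_subset ⟨hW, hWU⟩ hV'W).symm⟩

theorem stmt7 {A : Type*} [DistribLattice A] [BoundedOrder A]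
    (dia : A → A)
    (hjoin : ∀ a b : A, dia (a ⊔ b) = dia a ⊔ dia b) (hbot : dia ⊥ = ⊥)
    (U V : Set A) (hU : IsPrimeFilter U) (hV : IsPrimeFilter V)
    (hUV : ∀ a : A, a ∈ V → dia a ∈ U) :
    ∃ V' : Set A, IsPrimeFilter V' ∧ V ⊆ V' ∧ (∀ a : A, a ∈ V' → dia a ∈ U) ∧
      (∀ W : Set A, IsPrimeFilter W → V' ⊆ W → (∀ a : A, a ∈ W → dia a ∈ U) → W = V') :=
  stmt7_general dia U V hV hUV
end

section
/- Let A be a bounded distributive lattice and let ♦₋ : A → A satisfy ♦₋(a ⊓ b) = ♦₋a ⊔ ♦₋b for all a, b and ♦₋⊤ = ⊥. Let U and V be prime filters of A such that ♦₋a ∈ U for all a ∉ V. Then there exists a prime filter V' of A with V' ⊆ V, with ♦₋a ∈ U for all a ∉ V', and which is minimal with this property: every prime filter W with W ⊆ V' such that ♦₋a ∈ U for all a ∉ W equals V'. -/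
/-! The prime filters `W ⊆ V` with `♦₋a ∈ U` for every `a ∉ W` are closed under intersections of
nonempty chains, since an element outside the intersection lies outside some member of the chain.
Zorn's lemma then yields a minimal one. -/

section

variable {A : Type*} [DistribLattice A] [BoundedOrder A]

theorem IsPrimeFilter.sInter_of_isChain {c : Set (Set A)} (hc : ∀ W ∈ c, IsPrimeFilter W)
    (hchain : IsChain (· ⊆ ·) c) (hne : c.Nonempty) : IsPrimeFilter (⋂₀ c) := by
  obtain ⟨W₀, hW₀⟩ := hne
  refine ⟨fun a b ha hab W hW => (hc W hW).1 a b (ha W hW) hab,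
    fun a b ha hb W hW => (hc W hW).2.1 a b (ha W hW) (hb W hW),
    fun W hW => (hc W hW).2.2.1, fun hbot => (hc W₀ hW₀).2.2.2.1 (hbot W₀ hW₀), ?_⟩
  intro a b hab
  by_contra! h
  simp only [Set.mem_sInter, not_forall] at h
  obtain ⟨⟨W₁, hW₁, haW₁⟩, ⟨W₂, hW₂, hbW₂⟩⟩ := h
  -- the smaller of `W₁` and `W₂` omits both `a` and `b`
  obtain ⟨W, hW, haW, hbW⟩ : ∃ W ∈ c, a ∉ W ∧ b ∉ W := by
    rcases hchain.total hW₁ hW₂ with h₁₂ | h₂₁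
    · exact ⟨W₁, hW₁, haW₁, fun hb => hbW₂ (h₁₂ hb)⟩
    · exact ⟨W₂, hW₂, fun ha => haW₁ (h₂₁ ha), hbW₂⟩
  rcases (hc W hW).2.2.2.2 a b (hab W hW) with ha | hb
  exacts [haW ha, hbW hb]

theorem exists_minimal_isPrimeFilter_forall_notMem (P : A → Prop) {V : Set A}
    (hV : IsPrimeFilter V) (hPV : ∀ a, a ∉ V → P a) :
    ∃ V' ⊆ V, Minimal (fun W => IsPrimeFilter W ∧ ∀ a, a ∉ W → P a) V' := by
  refine zorn_superset_nonempty {W | IsPrimeFilter W ∧ ∀ a, a ∉ W → P a}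
    (fun c hcS hchain hne => ⟨⋂₀ c, ⟨?_, ?_⟩, fun W hW => Set.sInter_subset_of_mem hW⟩)
    V ⟨hV, hPV⟩
  · exact IsPrimeFilter.sInter_of_isChain (fun W hW => (hcS hW).1) hchain hne
  · intro a ha
    obtain ⟨W, hW, haW⟩ : ∃ W ∈ c, a ∉ W := by simpa [Set.mem_sInter] using ha
    exact (hcS hW).2 a haW

end

theorem stmt8_general {A : Type*} [DistribLattice A] [BoundedOrder A]
    (diam : A → A)
    (U V : Set A) (hV : IsPrimeFilter V)
    (hUV : ∀ a : A, a ∉ V → diam a ∈ U) :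
    ∃ V' : Set A, IsPrimeFilter V' ∧ V' ⊆ V ∧ (∀ a : A, a ∉ V' → diam a ∈ U) ∧
      (∀ W : Set A, IsPrimeFilter W → W ⊆ V' → (∀ a : A, a ∉ W → diam a ∈ U) → W = V') := by
  obtain ⟨V', hV'V, ⟨hV', hV'U⟩, hmin⟩ :=
    exists_minimal_isPrimeFilter_forall_notMem (fun a => diam a ∈ U) hV hUV
  exact ⟨V', hV', hV'V, hV'U, fun W hW hWV' hWU => hWV'.antisymm (hmin ⟨hW, hWU⟩ hWV')⟩

theorem stmt8 {A : Type*} [DistribLattice A] [BoundedOrder A]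
    (diam : A → A)
    (hmeet : ∀ a b : A, diam (a ⊓ b) = diam a ⊔ diam b) (htop : diam ⊤ = ⊥)
    (U V : Set A) (hU : IsPrimeFilter U) (hV : IsPrimeFilter V)
    (hUV : ∀ a : A, a ∉ V → diam a ∈ U) :
    ∃ V' : Set A, IsPrimeFilter V' ∧ V' ⊆ V ∧ (∀ a : A, a ∉ V' → diam a ∈ U) ∧
      (∀ W : Set A, IsPrimeFilter W → W ⊆ V' → (∀ a : A, a ∉ W → diam a ∈ U) → W = V') :=
  stmt8_general diam U V hV hUV
end

section
/- Let (W,≤) be a poset, let R^♦ be a minimally generated ♦₊-relation on W and R^□ a minimally generated □₊-relation on W. Then the following are equivalent: (i) R^♦ = ♦₊[R^♦ ∩ R^□] and R^□ = □₊[R^♦ ∩ R^□], where for a relation S, u ♦₊[S] v iff there exist u' ≤ u and v' ≥ v with u' S v', and u □₊[S] v iff there exist u' ≥ u and v' ≤ v with u' S v'; (ii) for all u R^♦ v there exist u' ≤ u and v' ≥ v with u' R^♦ v, u R^♦ v' and u' R^□ v', and for all u R^□ v there exist u' ≥ u and v' ≤ v with u' R^□ v, u R^□ v' and u' R^♦ v'.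 -/
/-!
For a minimally generated `♦₊`-relation `R`, condition (ii) applied to a minimal pair `u₀ R v₀`
yields `u' ≤ u₀` and `v' ≥ v₀` with `u' R v₀` and `u₀ R v'`; minimality forces `u' = u₀` and
`v' = v₀`, so the pair itself lies in the intersection, and every `u R v` is generated by it.
The converse is just upward closure. A `□₊`-relation on `W` is a `♦₊`-relation on `Wᵒᵈ`, so
the `□₊` half is the same statement read in the dual order.
-/

section

variable {W : Type*} [Preorder W]

def IsDiamondRel (R : W → W → Prop) : Prop :=
  ∀ u v u' v' : W, R u v → u ≤ u' → v' ≤ v → R u' v'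

def IsMinimallyGeneratedDiamondRel (R : W → W → Prop) : Prop :=
  ∀ u v : W, R u v → ∃ u₀ v₀, u₀ ≤ u ∧ v ≤ v₀ ∧ R u₀ v₀ ∧
    ∀ u₁ v₁, u₁ ≤ u₀ → v₀ ≤ v₁ → R u₁ v₁ → u₁ = u₀ ∧ v₁ = v₀

/-- `♦₊[S]`: the least `♦₊`-relation containing `S`. -/
def diamondGen (S : W → W → Prop) (u v : W) : Prop :=
  ∃ u' v', u' ≤ u ∧ v ≤ v' ∧ S u' v'

variable {R S : W → W → Prop}

theorem IsDiamondRel.diamondGen_le (hR : IsDiamondRel R) (hSR : ∀ u v, S u v → R u v)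
    {u v : W} (h : diamondGen S u v) : R u v := by
  obtain ⟨u', v', hu, hv, huv⟩ := h
  exact hR u' v' u v (hSR u' v' huv) hu hv

theorem IsDiamondRel.exists_of_eq_diamondGen_inf (hR : IsDiamondRel R)
    (h : ∀ u v, R u v ↔ diamondGen (fun a b => R a b ∧ S a b) u v) {u v : W} (huv : R u v) :
    ∃ u' v', u' ≤ u ∧ v ≤ v' ∧ R u' v ∧ R u v' ∧ S u' v' := by
  obtain ⟨u', v', hu, hv, hR', hS'⟩ := (h u v).1 huv
  exact ⟨u', v', hu, hv, hR u' v' u' v hR' le_rfl hv, hR u' v' u v' hR' hu le_rfl, hS'⟩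

theorem IsMinimallyGeneratedDiamondRel.diamondGen_inf_of_exists
    (hmin : IsMinimallyGeneratedDiamondRel R)
    (h : ∀ u v, R u v → ∃ u' v', u' ≤ u ∧ v ≤ v' ∧ R u' v ∧ R u v' ∧ S u' v')
    {u v : W} (huv : R u v) : diamondGen (fun a b => R a b ∧ S a b) u v := by
  obtain ⟨u₀, v₀, hu₀, hv₀, hR₀, hmin₀⟩ := hmin u v huv
  obtain ⟨u', v', hu', hv', hRu', hRv', hS⟩ := h u₀ v₀ hR₀
  obtain ⟨rfl, -⟩ := hmin₀ u' v₀ hu' le_rfl hRu'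
  obtain ⟨-, rfl⟩ := hmin₀ u' v' le_rfl hv' hRv'
  exact ⟨u', v', hu₀, hv₀, hR₀, hS⟩

theorem IsDiamondRel.eq_diamondGen_inf_iff (hR : IsDiamondRel R)
    (hmin : IsMinimallyGeneratedDiamondRel R) :
    (∀ u v, R u v ↔ diamondGen (fun a b => R a b ∧ S a b) u v) ↔
      ∀ u v, R u v → ∃ u' v', u' ≤ u ∧ v ≤ v' ∧ R u' v ∧ R u v' ∧ S u' v' :=
  ⟨fun h _ _ => hR.exists_of_eq_diamondGen_inf h,
    fun h _ _ => ⟨hmin.diamondGen_inf_of_exists h, hR.diamondGen_le fun _ _ => And.left⟩⟩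

end

theorem stmt9 {W : Type*} [PartialOrder W] (Rd Rb : W → W → Prop)
    -- `Rd` is a `♦₊`-relation
    (hd : ∀ u v u' v' : W, Rd u v → u ≤ u' → v' ≤ v → Rd u' v')
    -- `Rd` is minimally generated
    (hdmin : ∀ u v : W, Rd u v → ∃ u₀ v₀, u₀ ≤ u ∧ v ≤ v₀ ∧ Rd u₀ v₀ ∧
      ∀ u₁ v₁, u₁ ≤ u₀ → v₀ ≤ v₁ → Rd u₁ v₁ → u₁ = u₀ ∧ v₁ = v₀)
    -- `Rb` is a `□₊`-relation
    (hb : ∀ u v u' v' : W, Rb u v → u' ≤ u → v ≤ v' → Rb u' v')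
    -- `Rb` is minimally generated
    (hbmin : ∀ u v : W, Rb u v → ∃ u₀ v₀, u ≤ u₀ ∧ v₀ ≤ v ∧ Rb u₀ v₀ ∧
      ∀ u₁ v₁, u₀ ≤ u₁ → v₁ ≤ v₀ → Rb u₁ v₁ → u₁ = u₀ ∧ v₁ = v₀) :
    -- (i) both relations are generated by their intersection
    ((∀ u v : W, Rd u v ↔ ∃ u' v', u' ≤ u ∧ v ≤ v' ∧ Rd u' v' ∧ Rb u' v') ∧
     (∀ u v : W, Rb u v ↔ ∃ u' v', u ≤ u' ∧ v' ≤ v ∧ Rd u' v' ∧ Rb u' v')) ↔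
    -- (ii) the two frame conditions hold
    ((∀ u v : W, Rd u v →
        ∃ u' v', u' ≤ u ∧ v ≤ v' ∧ Rd u' v ∧ Rd u v' ∧ Rb u' v') ∧
     (∀ u v : W, Rb u v →
        ∃ u' v', u ≤ u' ∧ v' ≤ v ∧ Rb u' v ∧ Rb u v' ∧ Rd u' v')) := by
  have hdual : IsDiamondRel (W := Wᵒᵈ) Rb := hb
  have hdualmin : IsMinimallyGeneratedDiamondRel (W := Wᵒᵈ) Rb := hbmin
  refine and_congr (IsDiamondRel.eq_diamondGen_inf_iff (S := Rb) hd hdmin) ?_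
  simp only [and_comm (a := Rd _ _)]
  exact hdual.eq_diamondGen_inf_iff hdualmin
end

section
/- Let A be a bounded distributive lattice with ♦ : A → A satisfying ♦(a ⊔ b) = ♦a ⊔ ♦b and ♦⊥ = ⊥, and □₋ : A → A satisfying □₋(a ⊔ b) = □₋a ⊓ □₋b and □₋⊥ = ⊤, such that for all a, c ∈ A: ♦a ≤ □₋a ⊔ c implies ♦a ≤ c. Let U, V be prime filters of A such that ♦a ∈ U for all a ∈ V. Then there exists a prime filter U' with U' ⊆ U such that ♦a ∈ U' for all a ∈ V, and □₋a ∈ U' implies a ∉ V for all a. -/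
theorem monotone_of_map_sup {α β : Type*} [SemilatticeSup α] [SemilatticeSup β] {f : α → β}
    (hf : ∀ a b, f (a ⊔ b) = f a ⊔ f b) : Monotone f :=
  fun a b hab => by simpa [sup_eq_right.mpr hab] using (hf a b).symm.le

theorem antitone_of_map_sup_eq_inf {α β : Type*} [SemilatticeSup α] [SemilatticeInf β]
    {g : α → β} (hg : ∀ a b, g (a ⊔ b) = g a ⊓ g b) : Antitone g :=
  fun a b hab => by simpa [sup_eq_right.mpr hab] using (hg a b).le

section

variable {A : Type*} [Lattice A]

def imageFilter (f : A → A) (V : Set A) : Set A := {x | ∃ v ∈ V, f v ≤ x}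

def boxIdeal (U : Set A) (g : A → A) (V : Set A) : Set A :=
  {x | ∃ u ∉ U, ∃ v ∈ V, x ≤ u ⊔ g v}

theorem isPFilter_imageFilter {f : A → A} (hf : Monotone f) {V : Set A} (hV : V.Nonempty)
    (hVinf : InfClosed V) : Order.IsPFilter (imageFilter f V) := by
  refine Order.IsPFilter.of_def ?_ ?_ ?_
  · obtain ⟨v, hv⟩ := hV
    exact ⟨f v, v, hv, le_rfl⟩
  · rintro x ⟨v, hv, hvx⟩ y ⟨w, hw, hwy⟩
    exact ⟨x ⊓ y, ⟨v ⊓ w, hVinf hv hw, le_inf ((hf inf_le_left).trans hvx)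
      ((hf inf_le_right).trans hwy)⟩, inf_le_left, inf_le_right⟩
  · rintro x y hxy ⟨v, hv, hvx⟩
    exact ⟨v, hv, hvx.trans hxy⟩

theorem isIdeal_boxIdeal [OrderBot A] {g : A → A} (hg : Antitone g) {U V : Set A}
    (hU_bot : ⊥ ∉ U) (hU_prime : ∀ {a b}, a ⊔ b ∈ U → a ∈ U ∨ b ∈ U) (hV : V.Nonempty)
    (hVinf : InfClosed V) : Order.IsIdeal (boxIdeal U g V) := by
  refine ⟨fun x y hxy ⟨u, hu, v, hv, hle⟩ => ⟨u, hu, v, hv, hxy.trans hle⟩, ?_, ?_⟩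
  · obtain ⟨v, hv⟩ := hV
    exact ⟨⊥, ⊥, hU_bot, v, hv, bot_le⟩
  · rintro x ⟨u, hu, v, hv, hx⟩ y ⟨u', hu', w, hw, hy⟩
    refine ⟨x ⊔ y, ⟨u ⊔ u', fun h => (hU_prime h).elim hu hu', v ⊓ w, hVinf hv hw, ?_⟩,
      le_sup_left, le_sup_right⟩
    exact sup_le (hx.trans (sup_le_sup le_sup_left (hg inf_le_left)))
      (hy.trans (sup_le_sup le_sup_right (hg inf_le_right)))

theorem disjoint_imageFilter_boxIdeal {dia boxm : A → A} (hd : Monotone dia)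
    (hm : Antitone boxm) (hax : ∀ a c, dia a ≤ boxm a ⊔ c → dia a ≤ c) {U V : Set A}
    (hU : IsUpperSet U) (hVinf : InfClosed V)
    (hUV : ∀ a ∈ V, dia a ∈ U) : Disjoint (imageFilter dia V) (boxIdeal U boxm V) := by
  rw [Set.disjoint_left]
  rintro x ⟨v, hv, hvx⟩ ⟨u, hu, w, hw, hxu⟩
  have hle : dia (v ⊓ w) ≤ boxm (v ⊓ w) ⊔ u :=
    calc dia (v ⊓ w) ≤ dia v := hd inf_le_left
      _ ≤ u ⊔ boxm w := hvx.trans hxu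
      _ ≤ u ⊔ boxm (v ⊓ w) := sup_le_sup_left (hm inf_le_right) u
      _ = boxm (v ⊓ w) ⊔ u := sup_comm _ _
  exact hu (hU (hax _ _ hle) (hUV _ (hVinf hv hw)))

end

section

variable {A : Type*} [DistribLattice A] [BoundedOrder A] {F : Set A}

theorem IsPrimeFilter.isUpperSet (hF : IsPrimeFilter F) : IsUpperSet F :=
  fun a b hab ha => hF.1 a b ha hab

theorem IsPrimeFilter.top_mem_s11 (hF : IsPrimeFilter F) : ⊤ ∈ F := hF.2.2.1

theorem IsPrimeFilter.bot_notMem_s11 (hF : IsPrimeFilter F) : ⊥ ∉ F := hF.2.2.2.1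

theorem IsPrimeFilter.mem_or_mem (hF : IsPrimeFilter F) {a b : A} (h : a ⊔ b ∈ F) :
    a ∈ F ∨ b ∈ F :=
  hF.2.2.2.2 a b h

theorem IsPrimeFilter.nonempty (hF : IsPrimeFilter F) : F.Nonempty := ⟨⊤, hF.top_mem_s11⟩

theorem IsPrimeFilter.infClosed (hF : IsPrimeFilter F) : InfClosed F :=
  fun a ha b hb => hF.2.1 a b ha hb

theorem Order.Ideal.IsPrime.isPrimeFilter_compl {J : Order.Ideal A} (hJ : J.IsPrime) :
    IsPrimeFilter (J : Set A)ᶜ := by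
  refine ⟨fun a b ha hab hb => ha (J.lower hab hb), fun a b ha hb hab => ?_,
    hJ.top_notMem, fun h => h J.bot_mem, fun a b hab => ?_⟩
  · exact (hJ.mem_or_mem hab).elim ha hb
  · by_contra! h
    exact hab (J.sup_mem (not_not.mp h.1) (not_not.mp h.2))

end

theorem stmt11_general {A : Type*} [DistribLattice A] [BoundedOrder A]
    (dia boxm : A → A)
    (hd1 : ∀ a b : A, dia (a ⊔ b) = dia a ⊔ dia b)
    (hm1 : ∀ a b : A, boxm (a ⊔ b) = boxm a ⊓ boxm b)
    (hax : ∀ a c : A, dia a ≤ boxm a ⊔ c → dia a ≤ c)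
    (U V : Set A) (hU : IsPrimeFilter U) (hV : IsPrimeFilter V)
    (hUV : ∀ a : A, a ∈ V → dia a ∈ U) :
    ∃ U' : Set A, IsPrimeFilter U' ∧ U' ⊆ U ∧
      (∀ a : A, a ∈ V → dia a ∈ U') ∧ (∀ a : A, boxm a ∈ U' → a ∉ V) := by
  have hd := monotone_of_map_sup hd1
  have hm := antitone_of_map_sup_eq_inf hm1
  have hF := isPFilter_imageFilter hd hV.nonempty hV.infClosed
  have hI := isIdeal_boxIdeal hm hU.bot_notMem_s11 hU.mem_or_mem hV.nonempty hV.infClosed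
  obtain ⟨J, hJ, hIJ, hJF⟩ := DistribLattice.prime_ideal_of_disjoint_filter_ideal
    (F := hF.toPFilter) (I := hI.toIdeal)
    (disjoint_imageFilter_boxIdeal hd hm hax hU.isUpperSet hV.infClosed hUV)
  refine ⟨(J : Set A)ᶜ, hJ.isPrimeFilter_compl, fun x hx => ?_,
    fun a ha => Set.disjoint_left.mp hJF ⟨a, ha, le_rfl⟩,
    fun a ha haV => ha (hIJ ⟨⊥, hU.bot_notMem_s11, a, haV, le_sup_right⟩)⟩
  by_contra hxU
  exact hx (hIJ ⟨x, hxU, ⊤, hV.top_mem_s11, le_sup_left⟩)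

theorem stmt11 {A : Type*} [DistribLattice A] [BoundedOrder A]
    (dia boxm : A → A)
    (hd1 : ∀ a b : A, dia (a ⊔ b) = dia a ⊔ dia b) (hd2 : dia ⊥ = ⊥)
    (hm1 : ∀ a b : A, boxm (a ⊔ b) = boxm a ⊓ boxm b) (hm2 : boxm ⊥ = ⊤)
    (hax : ∀ a c : A, dia a ≤ boxm a ⊔ c → dia a ≤ c)
    (U V : Set A) (hU : IsPrimeFilter U) (hV : IsPrimeFilter V)
    (hUV : ∀ a : A, a ∈ V → dia a ∈ U) :
    ∃ U' : Set A, IsPrimeFilter U' ∧ U' ⊆ U ∧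
      (∀ a : A, a ∈ V → dia a ∈ U') ∧ (∀ a : A, boxm a ∈ U' → a ∉ V) :=
  stmt11_general dia boxm hd1 hm1 hax U V hU hV hUV
end

section
/- Let (W,≤) be a poset and R an arbitrary binary relation on W. Define u R^♦ v iff there exist u' ≤ u and v' ≥ v with u' R v'. Then the following are equivalent: (i) whenever v ≤ u and v R w, there exists w' with u R w' and w ≤ w' (i.e. ≥ ∘ R ⊆ R ∘ ≥); (ii) for every upset a of W, {u : ∃v, u R^♦ v ∧ v ∈ a} = {u : ∃v, u R v ∧ v ∈ a}. -/
/-!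
If `R` can be pushed up along `≤` (condition (i)), a witness `u' R v'` of `u R^♦ v` with `v ∈ a`
moves to a witness `u R w'` with `v ≤ v' ≤ w'`, which stays in the upset `a`. Conversely, testing
(ii) on the principal upset `↑w` turns `v ≤ u`, `v R w` into some `u R w'` with `w ≤ w'`.
-/

section

variable {W : Type*} [Preorder W] (R : W → W → Prop)

/-- The relation `R^♦` of the statement. -/
def diamondLift (u v : W) : Prop := ∃ u' v', u' ≤ u ∧ v ≤ v' ∧ R u' v'

variable {R}

theorem diamondLift_of_rel {u v : W} (h : R u v) : diamondLift R u v :=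
  ⟨u, v, le_rfl, le_rfl, h⟩

theorem exists_diamondLift_mem_iff
    (hR : ∀ v u w : W, v ≤ u → R v w → ∃ w', R u w' ∧ w ≤ w') {a : Set W} (ha : IsUpperSet a)
    (u : W) : (∃ v, diamondLift R u v ∧ v ∈ a) ↔ ∃ v, R u v ∧ v ∈ a := by
  constructor
  · rintro ⟨v, ⟨u', v', hu', hvv', hRuv'⟩, hva⟩
    obtain ⟨w', hRuw', hv'w'⟩ := hR u' u v' hu' hRuv'
    exact ⟨w', hRuw', ha (hvv'.trans hv'w') hva⟩
  · rintro ⟨v, hRuv, hva⟩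
    exact ⟨v, diamondLift_of_rel hRuv, hva⟩

theorem exists_rel_ge_of_diamondLift_mem
    (h : ∀ a : Set W, IsUpperSet a → ∀ u, (∃ v, diamondLift R u v ∧ v ∈ a) → ∃ v, R u v ∧ v ∈ a)
    {v u w : W} (hvu : v ≤ u) (hRvw : R v w) : ∃ w', R u w' ∧ w ≤ w' :=
  h (Set.Ici w) (isUpperSet_Ici w) u ⟨w, ⟨v, w, hvu, le_rfl, hRvw⟩, Set.self_mem_Ici⟩

end

theorem stmt13 {W : Type*} [PartialOrder W] (R : W → W → Prop) :
    (∀ v u w : W, v ≤ u → R v w → ∃ w', R u w' ∧ w ≤ w') ↔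
    (∀ a : Set W, (∀ u v : W, u ∈ a → u ≤ v → v ∈ a) →
      {u : W | ∃ v, (∃ u' v', u' ≤ u ∧ v ≤ v' ∧ R u' v') ∧ v ∈ a} =
        {u : W | ∃ v, R u v ∧ v ∈ a}) := by
  have upperSet_iff (a : Set W) : (∀ u v : W, u ∈ a → u ≤ v → v ∈ a) ↔ IsUpperSet a :=
    ⟨fun ha _ _ huv hu => ha _ _ hu huv, fun ha _ _ hu huv => ha huv hu⟩
  constructor
  · intro hR a ha
    ext u
    exact exists_diamondLift_mem_iff hR ((upperSet_iff a).1 ha) u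
  · intro h v u w hvu hRvw
    refine exists_rel_ge_of_diamondLift_mem (fun a ha u hu => ?_) hvu hRvw
    have hsets := h a ((upperSet_iff a).2 ha)
    exact hsets.subset hu
end

section
/- Let A be a Heyting algebra with maps □, ◆, ♦, ■ : A → A such that ◆ is left adjoint to □ (◆a ≤ b iff a ≤ □b for all a, b) and ♦ is left adjoint to ■ (♦a ≤ b iff a ≤ ■b for all a, b). Then (■a ⊓ ◆b ≤ ◆(a ⊓ b) for all a, b ∈ A) if and only if ((♦a ⇨ □b) ≤ □(a ⇨ b) for all a, b ∈ A), where ⇨ is the Heyting implication. -/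
/-! Transpose along the Heyting adjunction `(a ⊓ ·) ⊣ (a ⇨ ·)` and along the adjunction `l ⊣ u`;
the remaining gap in each direction is closed by a unit or counit of `l' ⊣ u'`. -/

section

variable {A : Type*} [HeytingAlgebra A] {l u l' u' : A → A}

theorem himp_le_u_himp_of_inf_le_l_inf (gc : GaloisConnection l u)
    (gc' : GaloisConnection l' u') (h : ∀ a b, u' a ⊓ l b ≤ l (a ⊓ b)) (a b : A) :
    (l' a ⇨ u b) ≤ u (a ⇨ b) := by
  rw [← gc.le_iff_le, le_himp_iff, inf_comm]
  calc a ⊓ l (l' a ⇨ u b) ≤ u' (l' a) ⊓ l (l' a ⇨ u b) := inf_le_inf_right _ (gc'.le_u_l a)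
    _ ≤ l (l' a ⊓ (l' a ⇨ u b)) := h _ _
    _ ≤ l (u b) := gc.monotone_l inf_himp_le
    _ ≤ b := gc.l_u_le b

theorem inf_le_l_inf_of_himp_le_u_himp (gc : GaloisConnection l u)
    (gc' : GaloisConnection l' u') (h : ∀ a b, (l' a ⇨ u b) ≤ u (a ⇨ b)) (a b : A) :
    u' a ⊓ l b ≤ l (a ⊓ b) := by
  rw [inf_comm, ← le_himp_iff, gc.le_iff_le]
  calc b ≤ a ⇨ u (l (a ⊓ b)) := le_himp_iff.mpr (inf_comm b a ▸ gc.le_u_l _)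
    _ ≤ l' (u' a) ⇨ u (l (a ⊓ b)) := himp_le_himp_right (gc'.l_u_le a)
    _ ≤ u (u' a ⇨ l (a ⊓ b)) := h _ _

end

theorem stmt15 {A : Type*} [HeytingAlgebra A]
    (box bdia dia bbox : A → A)
    (adj1 : ∀ a b : A, bdia a ≤ b ↔ a ≤ box b)
    (adj2 : ∀ a b : A, dia a ≤ b ↔ a ≤ bbox b) :
    (∀ a b : A, bbox a ⊓ bdia b ≤ bdia (a ⊓ b)) ↔
    (∀ a b : A, (dia a ⇨ box b) ≤ box (a ⇨ b)) :=
  ⟨himp_le_u_himp_of_inf_le_l_inf adj1 adj2, inf_le_l_inf_of_himp_le_u_himp adj1 adj2⟩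
end

section
/- Let A be a Heyting algebra with maps □₊, ◆, □₋, ■₋ : A → A such that ◆ is left adjoint to □₊ (◆a ≤ b iff a ≤ □₊b for all a, b) and □₋ and ■₋ form a contravariant Galois connection (a ≤ □₋b iff b ≤ ■₋a for all a, b). Then (■₋a ⊓ ◆a = ⊥ for all a ∈ A) if and only if (□₋a ≤ □₊(a ⇨ ⊥) for all a ∈ A), where ⇨ is the Heyting implication. -/
/-! Both conditions say that `b ⊓ ◆a = ⊥` whenever `a ≤ □₋b`: the first after unfolding the
contravariant Galois connection, the second after moving `◆` across its adjunction and using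
`b ⇨ ⊥ = bᶜ`. -/

theorem forall_disjoint_iff_of_contravariant_gc {α : Type*} [SemilatticeInf α] [OrderBot α]
    (f g h : α → α) (gc : ∀ a b, a ≤ g b ↔ b ≤ h a) :
    (∀ a, Disjoint (h a) (f a)) ↔ ∀ a b, a ≤ g b → Disjoint b (f a) := by
  refine ⟨fun hdis a b hab => (hdis a).mono_left ((gc a b).mp hab), fun hdis a => ?_⟩
  exact hdis a (h a) ((gc a (h a)).mpr le_rfl)

theorem GaloisConnection.forall_le_u_compl_iff {α : Type*} [HeytingAlgebra α] {l u : α → α}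
    (gc : GaloisConnection l u) (k : α → α) :
    (∀ b, k b ≤ u bᶜ) ↔ ∀ a b, a ≤ k b → Disjoint b (l a) := by
  simp only [← gc.le_iff_le, le_compl_iff_disjoint_right]
  refine ⟨fun hdis a b hab => ?_, fun hdis b => (hdis (k b) b le_rfl).symm⟩
  exact (hdis b).symm.mono_right (gc.monotone_l hab)

theorem stmt16 {A : Type*} [HeytingAlgebra A]
    (boxp bdia boxm bsq : A → A)
    (adj : ∀ a b : A, bdia a ≤ b ↔ a ≤ boxp b)
    (gal : ∀ a b : A, a ≤ boxm b ↔ b ≤ bsq a) :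
    (∀ a : A, bsq a ⊓ bdia a = ⊥) ↔ (∀ a : A, boxm a ≤ boxp (a ⇨ ⊥)) := by
  have gc : GaloisConnection bdia boxp := adj
  simp only [← disjoint_iff, himp_bot]
  rw [forall_disjoint_iff_of_contravariant_gc bdia boxm bsq gal, gc.forall_le_u_compl_iff]
end

section
/- Let (W,≤) be a poset, let R^♦ be a ♦₊-relation on W and R^□ a □₊-relation on W. Then the following are equivalent: (i) for all upsets a, b of W, □₊a ∩ ♦₊b ⊆ ♦₊(a ∩ b), where ♦₊x := {u : ∃v, u R^♦ v ∧ v ∈ x} and □₊x := {u : ∀v, u R^□ v → v ∈ x}; (ii) for all u, v with u R^♦ v there exists v' with v ≤ v', u R^♦ v' and u R^□ v'. -/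
/-!
For `(ii) → (i)`, a `♦₊`-successor `v ∈ b` of `u ∈ □₊a` is moved up to the `v'` given by (ii):
`v' ∈ a` since `u R^□ v'`, and `v' ∈ b` since `b` is an upset.
For `(i) → (ii)`, apply (i) at `u` to the upsets `a = {w | u R^□ w}` and `b = ↑v`.
-/

namespace Positive

variable {W : Type*} [Preorder W]

/-- The paper's `♦₊x`. -/
def dia (R : W → W → Prop) (x : Set W) : Set W := {u | ∃ v, R u v ∧ v ∈ x}

/-- The paper's `□₊x`. -/
def box (R : W → W → Prop) (x : Set W) : Set W := {u | ∀ v, R u v → v ∈ x}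

variable {Rd Rb : W → W → Prop}

theorem box_inter_dia_subset_dia_inter {a b : Set W} (hb : IsUpperSet b)
    (h : ∀ u v, Rd u v → ∃ v', v ≤ v' ∧ Rd u v' ∧ Rb u v') :
    box Rb a ∩ dia Rd b ⊆ dia Rd (a ∩ b) := by
  rintro u ⟨hua, v, huv, hvb⟩
  obtain ⟨v', hvv', huv'd, huv'b⟩ := h u v huv
  exact ⟨v', huv'd, hua v' huv'b, hb hvv' hvb⟩

theorem isUpperSet_setOf_rel (hRb : ∀ u v v', Rb u v → v ≤ v' → Rb u v') (u : W) :
    IsUpperSet {w | Rb u w} :=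
  fun _ _ hvv' huv => hRb u _ _ huv hvv'

theorem exists_le_rel_rel_of_box_inter_dia_subset
    (hRb : ∀ u v v', Rb u v → v ≤ v' → Rb u v')
    (h : ∀ a b : Set W, IsUpperSet a → IsUpperSet b → box Rb a ∩ dia Rd b ⊆ dia Rd (a ∩ b))
    {u v : W} (huv : Rd u v) : ∃ v', v ≤ v' ∧ Rd u v' ∧ Rb u v' := by
  obtain ⟨v', huv'd, huv'b, hvv'⟩ :=
    h {w | Rb u w} (Set.Ici v) (isUpperSet_setOf_rel hRb u) (isUpperSet_Ici v)
      ⟨fun _ hw => hw, v, huv, le_rfl⟩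
  exact ⟨v', hvv', huv'd, huv'b⟩

end Positive

open Positive in
theorem stmt17_general {W : Type*} [PartialOrder W] (Rd Rb : W → W → Prop)
    (hb : ∀ u v u' v' : W, Rb u v → u' ≤ u → v ≤ v' → Rb u' v') :
    (∀ a b : Set W, (∀ u v : W, u ∈ a → u ≤ v → v ∈ a) → (∀ u v : W, u ∈ b → u ≤ v → v ∈ b) →
      {u : W | ∀ v, Rb u v → v ∈ a} ∩ {u : W | ∃ v, Rd u v ∧ v ∈ b} ⊆
        {u : W | ∃ v, Rd u v ∧ v ∈ a ∩ b}) ↔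
    (∀ u v : W, Rd u v → ∃ v', v ≤ v' ∧ Rd u v' ∧ Rb u v') := by
  constructor
  · intro h u v huv
    refine exists_le_rel_rel_of_box_inter_dia_subset
      (fun u v v' huv hvv' => hb u v u v' huv le_rfl hvv') (fun a b ha hb' => ?_) huv
    exact h a b (fun _ _ hx hxy => ha hxy hx) (fun _ _ hx hxy => hb' hxy hx)
  · intro h a b _ hb'
    exact box_inter_dia_subset_dia_inter (fun _ _ hxy hx => hb' _ _ hx hxy) h

theorem stmt17 {W : Type*} [PartialOrder W] (Rd Rb : W → W → Prop)
    (hd : ∀ u v u' v' : W, Rd u v → u ≤ u' → v' ≤ v → Rd u' v')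
    (hb : ∀ u v u' v' : W, Rb u v → u' ≤ u → v ≤ v' → Rb u' v') :
    (∀ a b : Set W, (∀ u v : W, u ∈ a → u ≤ v → v ∈ a) → (∀ u v : W, u ∈ b → u ≤ v → v ∈ b) →
      {u : W | ∀ v, Rb u v → v ∈ a} ∩ {u : W | ∃ v, Rd u v ∧ v ∈ b} ⊆
        {u : W | ∃ v, Rd u v ∧ v ∈ a ∩ b}) ↔
    (∀ u v : W, Rd u v → ∃ v', v ≤ v' ∧ Rd u v' ∧ Rb u v') :=
  stmt17_general Rd Rb hb
end

section
/- Let A be a bounded distributive lattice with □ : A → A satisfying □(a ⊓ b) = □a ⊓ □b and □⊤ = ⊤, and ♦ : A → A satisfying ♦(a ⊔ b) = ♦a ⊔ ♦b and ♦⊥ = ⊥. Then the following are equivalent: (i) □a ⊓ ♦b ≤ ♦(a ⊓ b) and □(a ⊔ b) ≤ □a ⊔ ♦b for all a, b ∈ A (i.e. A is a positive modal algebra); (ii) there exist a Boolean algebra B, a map g : B → B with g(x ⊓ y) = g x ⊓ g y and g ⊤ = ⊤, and an injective map f : A → B with f(a ⊓ b) = f a ⊓ f b, f(a ⊔ b)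 = f a ⊔ f b, f ⊤ = ⊤, f ⊥ = ⊥, f(□a) = g(f a), and f(♦a) = (g((f a)ᶜ))ᶜ for all a, b ∈ A, where ᶜ is Boolean complement. -/
/-!
Jónsson–Tarski style canonical extension. For (i) ⇒ (ii), embed `A` into the powerset of its
prime filters (Stone) and let `g` be the box of the canonical relation: `P R Q` iff
`□⁻¹ P ⊆ Q` and `Q ⊆ ♦⁻¹ P`. The two positive-modal axioms are exactly what is needed to
separate, by the prime filter theorem, a successor of `P` avoiding `a` when `□a ∉ P`
(resp. containing `a` when `♦a ∈ P`). For (ii) ⇒ (i), both axioms hold for any meet-preserving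
`g` on a Boolean algebra and its dual `x ↦ (g xᶜ)ᶜ`, and they pull back along the embedding `f`.
-/

universe u

open Function

namespace Order

variable {α β : Type*}

section SupBot

variable [SemilatticeSup α] [OrderBot α] [SemilatticeSup β] [OrderBot β]

def Ideal.comap (f : SupBotHom α β) (I : Ideal β) : Ideal α where
  carrier := f ⁻¹' I
  lower' _ _ hyx hx := I.lower (OrderHomClass.mono f hyx) hx
  nonempty' := ⟨⊥, by simp⟩
  directed' x hx y hy := ⟨x ⊔ y, by simpa using Ideal.sup_mem hx hy, le_sup_left, le_sup_right⟩

end SupBot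

section InfTop

variable [SemilatticeInf α] [OrderTop α] [SemilatticeInf β] [OrderTop β]

def PFilter.comap (f : InfTopHom α β) (F : PFilter β) : PFilter α :=
  ⟨F.dual.comap (InfTopHom.dual f)⟩

end InfTop

namespace PFilter

variable [Lattice α]

/-- The filter generated by `F` and `a`. -/
def supPrincipal (F : PFilter α) (a : α) : PFilter α :=
  ⟨F.dual ⊔ Ideal.principal (OrderDual.toDual a)⟩

theorem mem_supPrincipal {F : PFilter α} {a x : α} :
    x ∈ F.supPrincipal a ↔ ∃ z ∈ F, z ⊓ a ≤ x :=
  Lattice.mem_ideal_sup_principal (OrderDual.toDual a) (OrderDual.toDual x) F.dual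

theorem le_supPrincipal (F : PFilter α) (a : α) : F ≤ F.supPrincipal a :=
  fun x hx => mem_supPrincipal.2 ⟨x, hx, inf_le_left⟩

theorem mem_supPrincipal_self (F : PFilter α) (a : α) : a ∈ F.supPrincipal a :=
  let ⟨z, hz⟩ := F.nonempty
  mem_supPrincipal.2 ⟨z, hz, inf_le_right⟩

end PFilter

namespace Ideal.PrimePair

theorem mem_I_iff [Preorder α] (p : PrimePair α) {x : α} : x ∈ p.I ↔ x ∉ p.F := by
  rw [← SetLike.mem_coe, ← p.compl_F_eq_I]
  rfl

theorem sup_mem_F_iff [Lattice α] (p : PrimePair α) {x y : α} :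
    x ⊔ y ∈ p.F ↔ x ∈ p.F ∨ y ∈ p.F := by
  simp only [← not_iff_not (a := _ ∈ p.F), ← mem_I_iff, Ideal.sup_mem_iff, not_or]

theorem exists_of_disjoint [DistribLattice α] {F : PFilter α} {I : Ideal α}
    (h : Disjoint (F : Set α) I) : ∃ p : PrimePair α, F ≤ p.F ∧ I ≤ p.I := by
  obtain ⟨J, hJ, hIJ, hFJ⟩ := DistribLattice.prime_ideal_of_disjoint_filter_ideal h
  exact ⟨hJ.toPrimePair, fun x hx => hFJ.notMem_of_mem_left hx, hIJ⟩

end Ideal.PrimePair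

end Order

def kripkeBox {X : Type*} (R : X → X → Prop) : InfTopHom (Set X) (Set X) where
  toFun S := {x | ∀ y, R x y → y ∈ S}
  map_inf' S T := by
    ext x
    simp [imp_and, forall_and]
  map_top' := by
    ext x
    simp

theorem mem_kripkeBox {X : Type*} {R : X → X → Prop} {S : Set X} {x : X} :
    x ∈ kripkeBox R S ↔ ∀ y, R x y → y ∈ S :=
  Iff.rfl

namespace DistribLattice

open Order Ideal

variable {A : Type*} [DistribLattice A] [BoundedOrder A]

def stoneHom : BoundedLatticeHom A (Set (PrimePair A)) where
  toFun a := {p | a ∈ p.F}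
  map_sup' _ _ := Set.ext fun p => p.sup_mem_F_iff
  map_inf' _ _ := Set.ext fun _ => PFilter.inf_mem_iff
  map_top' := Set.ext fun _ => by simp
  map_bot' := Set.ext fun p => by simp [← PrimePair.mem_I_iff]

theorem mem_stoneHom {a : A} {p : PrimePair A} : p ∈ stoneHom a ↔ a ∈ p.F :=
  Iff.rfl

theorem le_of_stoneHom_le {a b : A} (h : stoneHom a ≤ stoneHom b) : a ≤ b := by
  by_contra hab
  have hdisj : Disjoint (PFilter.principal a : Set A) (Ideal.principal b) :=
    Set.disjoint_left.2 fun x hax hxb => hab (le_trans hax hxb)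
  obtain ⟨p, haF, hbI⟩ := PrimePair.exists_of_disjoint hdisj
  exact (p.mem_I_iff.1 (hbI mem_principal_self)) (h (haF (PFilter.mem_principal.2 le_rfl)))

theorem stoneHom_injective : Injective (stoneHom (A := A)) :=
  fun _ _ h => le_antisymm (le_of_stoneHom_le h.le) (le_of_stoneHom_le h.ge)

end DistribLattice

namespace PositiveModalAlgebra

open Order Ideal DistribLattice

variable {A : Type*} [DistribLattice A] [BoundedOrder A] (box : InfTopHom A A) (dia : SupBotHom A A)

def canonicalRel (P Q : PrimePair A) : Prop :=
  P.F.comap box ≤ Q.F ∧ P.I.comap dia ≤ Q.I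

variable {box dia}

theorem exists_canonicalRel_of_box_mem_I (hbox : ∀ a b, box (a ⊔ b) ≤ box a ⊔ dia b)
    {P : PrimePair A} {a : A} (ha : box a ∈ P.I) :
    ∃ Q, canonicalRel box dia P Q ∧ a ∈ Q.I := by
  have hdisj : Disjoint (P.F.comap box : Set A) ↑(P.I.comap dia ⊔ principal a) := by
    refine Set.disjoint_left.2 fun x hx hxI => ?_
    obtain ⟨y, hy, hxy⟩ := (Lattice.mem_ideal_sup_principal a x _).1 hxI
    have hle : box x ≤ box a ⊔ dia y :=
      (OrderHomClass.mono box (hxy.trans_eq (sup_comm y a))).trans (hbox a y)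
    exact P.disjoint.notMem_of_mem_right hx (P.I.lower hle (sup_mem ha hy))
  obtain ⟨Q, hFQ, hIQ⟩ := PrimePair.exists_of_disjoint hdisj
  exact ⟨Q, ⟨hFQ, le_sup_left.trans hIQ⟩,
    hIQ (le_sup_right (a := P.I.comap dia) mem_principal_self)⟩

theorem exists_canonicalRel_of_dia_mem_F (hdia : ∀ a b, box a ⊓ dia b ≤ dia (a ⊓ b))
    {P : PrimePair A} {a : A} (ha : dia a ∈ P.F) :
    ∃ Q, canonicalRel box dia P Q ∧ a ∈ Q.F := by
  have hdisj : Disjoint ((P.F.comap box).supPrincipal a : Set A) (P.I.comap dia) := by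
    refine Set.disjoint_left.2 fun x hx hxI => ?_
    obtain ⟨z, hz, hzx⟩ := PFilter.mem_supPrincipal.1 hx
    have hle : box z ⊓ dia a ≤ dia x := (hdia z a).trans (OrderHomClass.mono dia hzx)
    exact P.disjoint.notMem_of_mem_left hxI (PFilter.mem_of_le hle (PFilter.inf_mem hz ha))
  obtain ⟨Q, hFQ, hIQ⟩ := PrimePair.exists_of_disjoint hdisj
  exact ⟨Q, ⟨(PFilter.le_supPrincipal _ _).trans hFQ, hIQ⟩,
    hFQ (PFilter.mem_supPrincipal_self _ _)⟩

theorem stoneHom_box (hbox : ∀ a b, box (a ⊔ b) ≤ box a ⊔ dia b) (a : A) :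
    stoneHom (box a) = kripkeBox (canonicalRel box dia) (stoneHom a) := by
  ext P
  simp only [mem_kripkeBox, mem_stoneHom]
  refine ⟨fun ha Q hPQ => hPQ.1 ha, fun hsucc => ?_⟩
  by_contra hba
  obtain ⟨Q, hPQ, haQ⟩ := exists_canonicalRel_of_box_mem_I hbox (P.mem_I_iff.2 hba)
  exact Q.mem_I_iff.1 haQ (hsucc Q hPQ)

theorem stoneHom_dia (hdia : ∀ a b, box a ⊓ dia b ≤ dia (a ⊓ b)) (a : A) :
    stoneHom (dia a) = (kripkeBox (canonicalRel box dia) (stoneHom a)ᶜ)ᶜ := by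
  ext P
  simp only [Set.mem_compl_iff, mem_kripkeBox, mem_stoneHom, not_forall, not_not, exists_prop]
  refine ⟨exists_canonicalRel_of_dia_mem_F hdia, fun ⟨Q, hPQ, haQ⟩ => ?_⟩
  by_contra hda
  exact Q.mem_I_iff.1 (hPQ.2 (P.mem_I_iff.2 hda)) haQ

end PositiveModalAlgebra

section BooleanAlgebra

variable {B : Type*} [BooleanAlgebra B] (g : InfHom B B)

theorem InfHom.inf_compl_map_compl_le (x y : B) : g x ⊓ (g yᶜ)ᶜ ≤ (g (x ⊓ y)ᶜ)ᶜ := by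
  have hle : g x ⊓ g (x ⊓ y)ᶜ ≤ g yᶜ := by
    rw [← map_inf, compl_inf, inf_sup_left, inf_compl_self, bot_sup_eq]
    exact OrderHomClass.mono g inf_le_right
  rw [le_compl_iff_disjoint_right, disjoint_iff_inf_le]
  calc g x ⊓ (g yᶜ)ᶜ ⊓ g (x ⊓ y)ᶜ = g x ⊓ g (x ⊓ y)ᶜ ⊓ (g yᶜ)ᶜ := by ac_rfl
    _ ≤ g yᶜ ⊓ (g yᶜ)ᶜ := inf_le_inf_right _ hle
    _ = ⊥ := inf_compl_self _

theorem InfHom.map_sup_le_sup_compl_map_compl (x y : B) : g (x ⊔ y) ≤ g x ⊔ (g yᶜ)ᶜ := by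
  refine isCompl_compl.le_sup_right_iff_inf_left_le.2 ?_
  rw [← map_inf, inf_sup_right, inf_compl_self, sup_bot_eq]
  exact OrderHomClass.mono g inf_le_left

end BooleanAlgebra

theorem InfHom.le_of_map_le_of_injective {α β : Type*} [SemilatticeInf α] [SemilatticeInf β]
    {f : InfHom α β} (hf : Injective f) {a b : α} (h : f a ≤ f b) : a ≤ b :=
  inf_eq_left.1 (hf (by rw [map_inf, inf_eq_left.2 h]))

theorem stmt19 {A : Type u} [DistribLattice A] [BoundedOrder A]
    (box dia : A → A)
    (hb1 : ∀ a b : A, box (a ⊓ b) = box a ⊓ box b) (hb2 : box ⊤ = ⊤)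
    (hd1 : ∀ a b : A, dia (a ⊔ b) = dia a ⊔ dia b) (hd2 : dia ⊥ = ⊥) :
    ((∀ a b : A, box a ⊓ dia b ≤ dia (a ⊓ b)) ∧
     (∀ a b : A, box (a ⊔ b) ≤ box a ⊔ dia b)) ↔
    (∃ (B : Type u) (_ : BooleanAlgebra B) (g : B → B) (f : A → B),
      (∀ x y : B, g (x ⊓ y) = g x ⊓ g y) ∧ g ⊤ = ⊤ ∧
      Function.Injective f ∧
      (∀ a b : A, f (a ⊓ b) = f a ⊓ f b) ∧
      (∀ a b : A, f (a ⊔ b) = f a ⊔ f b) ∧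
      f ⊤ = ⊤ ∧ f ⊥ = ⊥ ∧
      (∀ a : A, f (box a) = g (f a)) ∧
      (∀ a : A, f (dia a) = (g ((f a)ᶜ))ᶜ)) := by
  open DistribLattice PositiveModalAlgebra in
  constructor
  · rintro ⟨hdia, hbox⟩
    let box' : InfTopHom A A := ⟨⟨box, hb1⟩, hb2⟩
    let dia' : SupBotHom A A := ⟨⟨dia, hd1⟩, hd2⟩
    exact ⟨_, inferInstance, kripkeBox (canonicalRel box' dia'), stoneHom, map_inf _, map_top _,
      stoneHom_injective, map_inf _, map_sup _, map_top _, map_bot _,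
      stoneHom_box (box := box') (dia := dia') hbox, stoneHom_dia (box := box') (dia := dia') hdia⟩
  · rintro ⟨B, _, g, f, hg, -, hf, hf_inf, hf_sup, -, -, hf_box, hf_dia⟩
    let g' : InfHom B B := ⟨g, hg⟩
    let f' : InfHom A B := ⟨f, hf_inf⟩
    refine ⟨fun a b => InfHom.le_of_map_le_of_injective (f := f') hf ?_,
      fun a b => InfHom.le_of_map_le_of_injective (f := f') hf ?_⟩
    · simpa only [f', g', InfHom.coe_mk, hf_inf, hf_box, hf_dia] using
        g'.inf_compl_map_compl_le (f a) (f b)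
    · simpa only [f', g', InfHom.coe_mk, hf_sup, hf_box, hf_dia] using
        g'.map_sup_le_sup_compl_map_compl (f a) (f b)
end
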